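/- Let φ: ℝ⁴ → ℂ be a nonvanishing C² function satisfying the Klein-Gordon equation (iħ∂_ν + eA_ν)(iħ∂^ν + eA^ν)φ = m₀²c²φ for a C¹ vector field A, and let 𝒱^μ(x) := iλ² ∂^μ ln φ(x) + (e/m₀)A^μ(x) with λ² = ħ/m₀. Then 𝒱*_μ(x)𝒱^μ(x) = c² + (ħ²/(2m₀²)) · ∂_μ∂^μ(φ*(x)φ(x)) / (φ*(x)φ(x)) for all x with φ(x) ≠ 0. -/

import Mathlib

/-!
Put `P_μ = iħ∂_μ + eA_μ`. Since `λ² = ħ/m₀`, the complex velocity is `𝒱_μ = P_μφ / (m₀φ)`. The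
product rule gives, for each `μ` separately, the pointwise identity
`|P_μφ|² = Re (φ* P_μP_μφ) + (ħ²/2) ∂_μ∂_μ(φ*φ)`, in which the terms carrying `A` cancel because
`A` is real. Contracting with the metric and inserting the Klein-Gordon equation gives
`η^μμ |P_μφ|² = m₀²c² φ*φ + (ħ²/2) □(φ*φ)`; dividing by `m₀² φ*φ` is the claim.
-/

open Complex

noncomputable section

/-- Spacetime `ℝ⁴`. -/
abbrev Spt := Fin 4 → ℝ

/-- Components of the Minkowski metric `diag(+1,-1,-1,-1)`. -/
def η (μ : Fin 4) : ℝ := if μ = 0 then 1 else -1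

def pdC (μ : Fin 4) (f : Spt → ℂ) (x : Spt) : ℂ := fderiv ℝ f x (Pi.single μ 1)

/-- `iħ∂_μ f + e A_μ f` (with `A μ` the lowered components `A_μ`). -/
def Pop (hbar e : ℝ) (A : Fin 4 → Spt → ℝ) (μ : Fin 4) (f : Spt → ℂ) (x : Spt) : ℂ :=
  I * (hbar : ℂ) * pdC μ f x + (e : ℂ) * (A μ x) * f x

/-- The Klein-Gordon operator `(iħ∂_ν + eA_ν)(iħ∂^ν + eA^ν)φ`. -/
def KGop (hbar e : ℝ) (A : Fin 4 → Spt → ℝ) (φ : Spt → ℂ) (x : Spt) : ℂ :=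
  ∑ ν : Fin 4, (η ν : ℂ) * Pop hbar e A ν (fun y => Pop hbar e A ν φ y) x

/-- The d'Alembertian `∂_μ∂^μ f`. -/
def boxC (f : Spt → ℂ) (x : Spt) : ℂ :=
  ∑ μ : Fin 4, (η μ : ℂ) * pdC μ (fun y => pdC μ f y) x

/-- The lowered complex velocity `𝒱_μ = iλ²∂_μ ln φ + (e/m₀)A_μ`. -/
def cVelLow (lam m₀ e : ℝ) (A : Fin 4 → Spt → ℝ) (φ : Spt → ℂ) (μ : Fin 4) (x : Spt) : ℂ :=
  I * (lam : ℂ) ^ 2 * pdC μ φ x / φ x + ((e / m₀ : ℝ) : ℂ) * (A μ x)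


open ComplexConjugate

variable {φ f g : Spt → ℂ} {x : Spt}

lemma pdC_add (hf : DifferentiableAt ℝ f x) (hg : DifferentiableAt ℝ g x) (μ : Fin 4) :
    pdC μ (fun y => f y + g y) x = pdC μ f x + pdC μ g x := by
  simp [pdC, fderiv_fun_add hf hg]

lemma pdC_const_mul (hf : DifferentiableAt ℝ f x) (c : ℂ) (μ : Fin 4) :
    pdC μ (fun y => c * f y) x = c * pdC μ f x := by
  simp [pdC, fderiv_const_mul hf c]

lemma pdC_mul (hf : DifferentiableAt ℝ f x) (hg : DifferentiableAt ℝ g x) (μ : Fin 4) :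
    pdC μ (fun y => f y * g y) x = pdC μ f x * g x + f x * pdC μ g x := by
  simp only [pdC, fderiv_fun_mul hf hg, add_apply, smul_apply, smul_eq_mul]
  ring

lemma pdC_conj (μ : Fin 4) :
    pdC μ (fun y => conj (f y)) x = conj (pdC μ f x) := by
  change fderiv ℝ (fun y => star (f y)) x _ = star _
  rw [fderiv_star]
  rfl

lemma pdC_ofReal {a : Spt → ℝ} (ha : DifferentiableAt ℝ a x) (μ : Fin 4) :
    pdC μ (fun y => (a y : ℂ)) x = (fderiv ℝ a x (Pi.single μ 1) : ℂ) := by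
  have h : HasFDerivAt (fun y => (a y : ℂ)) (ofRealCLM.comp (fderiv ℝ a x)) x :=
    ofRealCLM.hasFDerivAt.comp x ha.hasFDerivAt
  rw [pdC, h.fderiv]
  rfl

lemma differentiable_pdC (hf : ContDiff ℝ 2 f) (μ : Fin 4) : Differentiable ℝ (pdC μ f) :=
  ((hf.fderiv_right le_rfl).differentiable one_ne_zero).clm_apply (differentiable_const _)

lemma differentiableAt_conj (hf : DifferentiableAt ℝ f x) :
    DifferentiableAt ℝ (fun y => conj (f y)) x :=
  hf.star

lemma pdC_conj_mul_self (hφ : Differentiable ℝ φ) (μ : Fin 4) :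
    pdC μ (fun y => conj (φ y) * φ y) =
      fun y => conj (pdC μ φ y) * φ y + conj (φ y) * pdC μ φ y := by
  funext y
  rw [pdC_mul (differentiableAt_conj (hφ y)) (hφ y), pdC_conj]

lemma pdC_pdC_conj_mul_self (hφ : ContDiff ℝ 2 φ) (μ : Fin 4) :
    pdC μ (pdC μ (fun y => conj (φ y) * φ y)) x =
      conj (pdC μ (pdC μ φ) x) * φ x + 2 * conj (pdC μ φ x) * pdC μ φ x
        + conj (φ x) * pdC μ (pdC μ φ) x := by
  have hφ' : Differentiable ℝ φ := hφ.differentiable (by norm_num)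
  have hDφ := differentiable_pdC hφ μ
  rw [pdC_conj_mul_self hφ', pdC_add
    ((differentiableAt_conj (hDφ x)).fun_mul (hφ' x))
    ((differentiableAt_conj (hφ' x)).fun_mul (hDφ x)),
    pdC_mul (differentiableAt_conj (hDφ x)) (hφ' x), pdC_mul (differentiableAt_conj (hφ' x)) (hDφ x),
    pdC_conj, pdC_conj]
  ring

variable (hbar e : ℝ) (A : Fin 4 → Spt → ℝ) (μ : Fin 4)

lemma pdC_Pop (hφ : ContDiff ℝ 2 φ) (hA : DifferentiableAt ℝ (A μ) x) :
    pdC μ (Pop hbar e A μ φ) x = I * hbar * pdC μ (pdC μ φ) x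
      + e * ((fderiv ℝ (A μ) x (Pi.single μ 1) : ℂ) * φ x + A μ x * pdC μ φ x) := by
  have hφ' : Differentiable ℝ φ := hφ.differentiable (by norm_num)
  have hAC : DifferentiableAt ℝ (fun y => (A μ y : ℂ)) x := ofRealCLM.differentiableAt.comp x hA
  have hPop : Pop hbar e A μ φ = fun y => I * hbar * pdC μ φ y + e * (A μ y * φ y) := by
    funext y
    simp only [Pop, mul_assoc]
  rw [hPop, pdC_add ((differentiable_pdC hφ μ x).const_mul _) ((hAC.fun_mul (hφ' x)).const_mul _),
    pdC_const_mul (differentiable_pdC hφ μ x), pdC_const_mul (hAC.fun_mul (hφ' x)),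
    pdC_mul hAC (hφ' x), pdC_ofReal hA]

lemma conj_Pop_mul_Pop (hφ : ContDiff ℝ 2 φ) (hA : DifferentiableAt ℝ (A μ) x) :
    conj (Pop hbar e A μ φ x) * Pop hbar e A μ φ x =
      (conj (φ x) * Pop hbar e A μ (Pop hbar e A μ φ) x
          + φ x * conj (Pop hbar e A μ (Pop hbar e A μ φ) x)) / 2
        + hbar ^ 2 / 2 * pdC μ (pdC μ (fun y => conj (φ y) * φ y)) x := by
  rw [pdC_pdC_conj_mul_self hφ]
  simp only [Pop]
  rw [pdC_Pop hbar e A μ hφ hA]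
  simp only [map_add, map_mul, conj_I, conj_ofReal]
  linear_combination -(hbar : ℂ) ^ 2 *
    ((pdC μ (pdC μ φ) x * conj (φ x) + conj (pdC μ (pdC μ φ) x) * φ x) / 2
      + conj (pdC μ φ x) * pdC μ φ x) * I_sq

lemma sum_eta_conj_Pop_mul_Pop (hφ : ContDiff ℝ 2 φ) (hA : ∀ μ, DifferentiableAt ℝ (A μ) x) :
    ∑ μ : Fin 4, (η μ : ℂ) * (conj (Pop hbar e A μ φ x) * Pop hbar e A μ φ x) =
      (conj (φ x) * KGop hbar e A φ x + φ x * conj (KGop hbar e A φ x)) / 2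
        + hbar ^ 2 / 2 * boxC (fun y => conj (φ y) * φ y) x := by
  simp only [KGop, boxC, map_sum, map_mul, conj_ofReal, Finset.mul_sum, ← Finset.sum_add_distrib,
    Finset.sum_div]
  refine Finset.sum_congr rfl fun μ _ => ?_
  linear_combination (η μ : ℂ) * conj_Pop_mul_Pop hbar e A μ hφ (hA μ)

lemma cVelLow_eq_Pop_div {lam m₀ : ℝ} (hlam : lam ^ 2 = hbar / m₀) (hx : φ x ≠ 0) :
    cVelLow lam m₀ e A φ μ x = Pop hbar e A μ φ x / (m₀ * φ x) := by
  have hlamC : (lam : ℂ) ^ 2 = hbar / m₀ := by exact_mod_cast hlam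
  rw [cVelLow, Pop, hlamC]
  field_simp
  push_cast
  ring

theorem complex_velocity_square_KG_general
    (hbar m₀ e c lam : ℝ) (hm : 0 < m₀)
    (hlam : lam ^ 2 = hbar / m₀)
    (φ : Spt → ℂ) (hφ : ContDiff ℝ 2 φ)
    (A : Fin 4 → Spt → ℝ) (hA : ∀ μ, ContDiff ℝ 1 (A μ))
    (hKG : ∀ x, KGop hbar e A φ x = (m₀ : ℂ) ^ 2 * (c : ℂ) ^ 2 * φ x) :
    ∀ x : Spt, φ x ≠ 0 →
      (∑ μ : Fin 4, (η μ : ℂ) * (starRingEnd ℂ) (cVelLow lam m₀ e A φ μ x) *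
          cVelLow lam m₀ e A φ μ x)
      = (c : ℂ) ^ 2 + ((hbar : ℂ) ^ 2 / (2 * (m₀ : ℂ) ^ 2)) *
          boxC (fun y => (starRingEnd ℂ) (φ y) * φ y) x /
          ((starRingEnd ℂ) (φ x) * φ x) := by
  intro x hx
  have hm₀ : (m₀ : ℂ) ≠ 0 := by exact_mod_cast hm.ne'
  have hφc : conj (φ x) ≠ 0 := (map_ne_zero _).2 hx
  have hsum := sum_eta_conj_Pop_mul_Pop (x := x) hbar e A hφ fun μ =>
    ((hA μ).differentiable one_ne_zero).differentiableAt
  simp only [cVelLow_eq_Pop_div hbar e A _ hlam hx, map_div₀, map_mul, conj_ofReal]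
  calc ∑ μ : Fin 4, (η μ : ℂ) * (conj (Pop hbar e A μ φ x) / (m₀ * conj (φ x)))
          * (Pop hbar e A μ φ x / (m₀ * φ x))
      = (∑ μ : Fin 4, (η μ : ℂ) * (conj (Pop hbar e A μ φ x) * Pop hbar e A μ φ x))
          / (m₀ ^ 2 * (conj (φ x) * φ x)) := by
        rw [Finset.sum_div]
        refine Finset.sum_congr rfl fun μ _ => ?_
        field_simp
    _ = _ := by
        rw [hsum, hKG x]
        simp only [map_mul, map_pow, conj_ofReal]
        field_simp
        ring

/-- **For a Klein-Gordon wave function,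
`𝒱*_μ𝒱^μ = c² + (ħ²/2m₀²)·∂_μ∂^μ(φ*φ)/(φ*φ)`.** -/
theorem complex_velocity_square_KG
    (hbar m₀ e c lam : ℝ) (hhb : 0 < hbar) (hm : 0 < m₀) (he : 0 < e) (hc : 0 < c)
    (hlam : lam ^ 2 = hbar / m₀)
    (φ : Spt → ℂ) (hφ : ContDiff ℝ 2 φ) (hφ0 : ∀ x, φ x ≠ 0)
    (A : Fin 4 → Spt → ℝ) (hA : ∀ μ, ContDiff ℝ 1 (A μ))
    (hKG : ∀ x, KGop hbar e A φ x = (m₀ : ℂ) ^ 2 * (c : ℂ) ^ 2 * φ x) :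
    ∀ x : Spt, φ x ≠ 0 →
      (∑ μ : Fin 4, (η μ : ℂ) * (starRingEnd ℂ) (cVelLow lam m₀ e A φ μ x) *
          cVelLow lam m₀ e A φ μ x)
      = (c : ℂ) ^ 2 + ((hbar : ℂ) ^ 2 / (2 * (m₀ : ℂ) ^ 2)) *
          boxC (fun y => (starRingEnd ℂ) (φ y) * φ y) x /
          ((starRingEnd ℂ) (φ x) * φ x) :=
  complex_velocity_square_KG_general hbar m₀ e c lam hm hlam φ hφ A hA hKG
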